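/- arXiv:1712.07243 — 3 statements merged into one kernel-verified Lean document; each statement's English description precedes it below -/
import Mathlib

section
/- None of the fourteen integers 1494, 1495, 1496, 1497, 1498, 1499, 1500, 1501, 1502, 1503, 1504, 1505, 1506, 1507 can be written as x² + y² for integers x and y. -/
lemma aux_no_sum_sq : ∀ a ∈ Finset.range 39, ∀ b ∈ Finset.range 39,
    a ^ 2 + b ^ 2 < 1494 ∨ 1507 < a ^ 2 + b ^ 2 := by decide

theorem no_sum_of_two_squares_1494_to_1507 :
    ∀ m : ℤ, 1494 ≤ m → m ≤ 1507 → ¬ ∃ x y : ℤ, m = x ^ 2 + y ^ 2 := by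
  rintro m hm hm' ⟨x, y, h⟩
  have hx2 : (x.natAbs : ℤ) ^ 2 = x ^ 2 := by push_cast [Int.natAbs_sq]; ring_nf; simp [sq, Int.natAbs_mul_self]
  have hy2 : (y.natAbs : ℤ) ^ 2 = y ^ 2 := by push_cast [Int.natAbs_sq]; ring_nf; simp [sq, Int.natAbs_mul_self]
  set a := x.natAbs
  set b := y.natAbs
  have hab : (a : ℤ) ^ 2 + (b : ℤ) ^ 2 = m := by rw [hx2, hy2, h]
  have ha : a ≤ 38 := by
    by_contra hc
    push_neg at hc
    have : (39 : ℤ) ≤ (a : ℤ) := by exact_mod_cast hc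
    nlinarith [sq_nonneg (b : ℤ)]
  have hb : b ≤ 38 := by
    by_contra hc
    push_neg at hc
    have : (39 : ℤ) ≤ (b : ℤ) := by exact_mod_cast hc
    nlinarith [sq_nonneg (a : ℤ)]
  have := aux_no_sum_sq a (Finset.mem_range.2 (by omega)) b (Finset.mem_range.2 (by omega))
  rcases this with h1 | h1
  · have : ((a ^ 2 + b ^ 2 : ℕ) : ℤ) < 1494 := by exact_mod_cast h1
    push_cast at this; omega
  · have : (1507 : ℤ) < ((a ^ 2 + b ^ 2 : ℕ) : ℤ) := by exact_mod_cast h1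
    push_cast at this; omega
end

section
/- If c is a real constant such that for every integer n ≥ 1 there exist integers x and y with n < x² + y² < n + c·n^{1/4}, then c > 2^{-1/2}·5^{3/4}. -/
/-! At `n = 20` the hypothesis yields a sum of two squares in `(20, 20 + c·20^{1/4})`. None of
`21, …, 24` is a sum of two squares, so `25 < 20 + c·20^{1/4}`, that is
`c > 5 / 20^{1/4} = 2^{-1/2}·5^{3/4}`. -/

lemma twentyfive_le_sq_add_sq_of_twenty_lt {x y : ℤ} (h : 20 < x ^ 2 + y ^ 2) :
    25 ≤ x ^ 2 + y ^ 2 := by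
  by_contra! hlt
  obtain ⟨hx₁, hx₂⟩ := abs_lt_of_sq_lt_sq' (a := x) (b := 5) (by nlinarith [sq_nonneg y]) (by norm_num)
  obtain ⟨hy₁, hy₂⟩ := abs_lt_of_sq_lt_sq' (a := y) (b := 5) (by nlinarith [sq_nonneg x]) (by norm_num)
  interval_cases x <;> interval_cases y <;> omega

lemma sub_lt_of_no_sq_add_sq_between {n m : ℤ} {L : ℝ}
    (hgap : ∀ x y : ℤ, n < x ^ 2 + y ^ 2 → m ≤ x ^ 2 + y ^ 2)
    (h : ∃ x y : ℤ, (n : ℝ) < (x : ℝ) ^ 2 + (y : ℝ) ^ 2 ∧ (x : ℝ) ^ 2 + (y : ℝ) ^ 2 < n + L) :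
    ((m - n : ℤ) : ℝ) < L := by
  obtain ⟨x, y, hlo, hhi⟩ := h
  have hm : (m : ℝ) ≤ (x : ℝ) ^ 2 + (y : ℝ) ^ 2 := by
    exact_mod_cast hgap x y (by exact_mod_cast hlo)
  push_cast
  linarith

lemma two_rpow_neg_half_mul_five_rpow_three_quarters :
    (2 : ℝ) ^ (-(1 : ℝ) / 2) * (5 : ℝ) ^ ((3 : ℝ) / 4) = 5 / (20 : ℝ) ^ ((1 : ℝ) / 4) := by
  have h20 : (20 : ℝ) ^ ((1 : ℝ) / 4) = (2 : ℝ) ^ ((1 : ℝ) / 2) * (5 : ℝ) ^ ((1 : ℝ) / 4) := by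
    rw [show (20 : ℝ) = 2 ^ (2 : ℝ) * 5 by norm_num, Real.mul_rpow (by positivity) (by norm_num),
      ← Real.rpow_mul (by norm_num)]
    norm_num
  rw [eq_div_iff (by positivity), h20, mul_mul_mul_comm, ← Real.rpow_add (by norm_num),
    ← Real.rpow_add (by norm_num)]
  norm_num

theorem uchiyama_original_lower_bound (c : ℝ)
    (h : ∀ n : ℤ, 1 ≤ n → ∃ x y : ℤ,
      (n : ℝ) < (x : ℝ) ^ 2 + (y : ℝ) ^ 2 ∧
      (x : ℝ) ^ 2 + (y : ℝ) ^ 2 < (n : ℝ) + c * (n : ℝ) ^ ((1 : ℝ) / 4)) :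
    c > (2 : ℝ) ^ (-(1 : ℝ) / 2) * (5 : ℝ) ^ ((3 : ℝ) / 4) := by
  have h5 : ((25 - 20 : ℤ) : ℝ) < c * ((20 : ℤ) : ℝ) ^ ((1 : ℝ) / 4) :=
    sub_lt_of_no_sq_add_sq_between (fun _ _ => twentyfive_le_sq_add_sq_of_twenty_lt)
      (h 20 (by norm_num))
  rw [two_rpow_neg_half_mul_five_rpow_three_quarters, gt_iff_lt, div_lt_iff₀ (by positivity)]
  exact_mod_cast h5
end

section
/- For every integer n ≥ 1 there exist integers x and y with n < x² + y² < n + 2^{3/2}·n^{1/4}. -/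
set_option maxHeartbeats 800000 in
theorem uchiyama_theorem :
    ∀ n : ℤ, 1 ≤ n → ∃ x y : ℤ,
      (n : ℝ) < (x : ℝ) ^ 2 + (y : ℝ) ^ 2 ∧
      (x : ℝ) ^ 2 + (y : ℝ) ^ 2 < (n : ℝ) + (2 : ℝ) ^ ((3 : ℝ) / 2) * (n : ℝ) ^ ((1 : ℝ) / 4) := by
  intro n hn
  have hn0 : 0 ≤ n := by linarith
  obtain ⟨m, rfl⟩ : ∃ m : ℕ, n = (m : ℤ) := ⟨n.toNat, (Int.toNat_of_nonneg hn0).symm⟩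
  obtain ⟨a, ha0, ha2, hlt⟩ :
      ∃ a : ℤ, 0 ≤ a ∧ a ^ 2 ≤ (m : ℤ) ∧ (m : ℤ) < (a + 1) ^ 2 := by
    refine ⟨(Nat.sqrt m : ℤ), Int.natCast_nonneg _, ?_, ?_⟩
    · exact_mod_cast Nat.sqrt_le' m
    · exact_mod_cast Nat.lt_succ_sqrt' m
  have ha1 : 1 ≤ a := by
    rcases Int.lt_or_le a 1 with h | h
    · interval_cases a; omega
    · exact h
  obtain ⟨r, hrdef, hr0, hr2a⟩ : ∃ r : ℤ, (m : ℤ) = a ^ 2 + r ∧ 0 ≤ r ∧ r ≤ 2 * a := by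
    refine ⟨(m : ℤ) - a ^ 2, by ring, by omega, by nlinarith⟩
  -- real versions
  have hA1 : (1 : ℝ) ≤ (a : ℝ) := by exact_mod_cast ha1
  have hR0 : (0 : ℝ) ≤ (r : ℝ) := by exact_mod_cast hr0
  have hR2a : (r : ℝ) ≤ 2 * (a : ℝ) := by exact_mod_cast hr2a
  have hm : (m : ℝ) = (a : ℝ) ^ 2 + (r : ℝ) := by exact_mod_cast hrdef
  have hsA1 : (1 : ℝ) ≤ Real.sqrt a := Real.one_le_sqrt.2 hA1
  have hc23 : (2 : ℝ) ^ ((3 : ℝ) / 2) = 2 * Real.sqrt 2 := by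
    rw [show (3 : ℝ) / 2 = 1 + 1 / 2 by norm_num, Real.rpow_add (by norm_num), Real.rpow_one,
      Real.sqrt_eq_rpow]
  have hsqA : Real.sqrt (a : ℝ) ^ 2 = (a : ℝ) := Real.sq_sqrt (by linarith)
  have hn14 : Real.sqrt (a : ℝ) ≤ (m : ℝ) ^ ((1 : ℝ) / 4) := by
    have h1 : Real.sqrt (a : ℝ) = ((a : ℝ) ^ 2) ^ ((1 : ℝ) / 4) := by
      rw [← Real.rpow_natCast (a : ℝ) 2, ← Real.rpow_mul (by linarith)]
      norm_num [Real.sqrt_eq_rpow]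
    rw [h1]
    apply Real.rpow_le_rpow (by positivity) _ (by norm_num)
    exact_mod_cast ha2
  have hw : Real.sqrt 2 ^ 2 = 2 := Real.sq_sqrt (by norm_num)
  have hw1 : (1 : ℝ) < Real.sqrt 2 := by
    nlinarith [Real.sqrt_nonneg (2 : ℝ)]
  rw [hc23]
  have hmono : 2 * Real.sqrt 2 * Real.sqrt (a : ℝ) ≤
      2 * Real.sqrt 2 * (m : ℝ) ^ ((1 : ℝ) / 4) :=
    mul_le_mul_of_nonneg_left hn14 (by positivity)
  by_cases hcase : 2 * (a : ℝ) + 1 - (r : ℝ) < 2 * Real.sqrt 2 * Real.sqrt a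
  · refine ⟨a + 1, 0, ?_, ?_⟩
    · push_cast
      nlinarith
    · push_cast
      nlinarith
  · push_neg at hcase
    obtain ⟨s, hs0', hs2, hslt⟩ :
        ∃ s : ℤ, 0 ≤ s ∧ s ^ 2 ≤ r ∧ r < (s + 1) ^ 2 := by
      refine ⟨(Nat.sqrt r.toNat : ℤ), Int.natCast_nonneg _, ?_, ?_⟩
      · have h2 : ((Nat.sqrt r.toNat : ℤ)) ^ 2 ≤ (r.toNat : ℤ) := by
          exact_mod_cast Nat.sqrt_le' r.toNat
        rwa [Int.toNat_of_nonneg hr0] at h2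
      · have h2 : (r.toNat : ℤ) < ((Nat.sqrt r.toNat : ℤ) + 1) ^ 2 := by
          exact_mod_cast Nat.lt_succ_sqrt' r.toNat
        rwa [Int.toNat_of_nonneg hr0] at h2
    have hs0 : (0 : ℝ) ≤ (s : ℝ) := by exact_mod_cast hs0'
    have hsv : (s : ℝ) ≤ Real.sqrt (r : ℝ) := by
      rw [Real.le_sqrt hs0 hR0]
      exact_mod_cast hs2
    have hvr : Real.sqrt (r : ℝ) ^ 2 = (r : ℝ) := Real.sq_sqrt hR0
    have hv0 : (0 : ℝ) ≤ Real.sqrt (r : ℝ) := Real.sqrt_nonneg _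
    have hR2 : ((r : ℝ)) < ((s : ℝ) + 1) ^ 2 := by exact_mod_cast hslt
    refine ⟨a, s + 1, ?_, ?_⟩
    · push_cast
      nlinarith
    · push_cast
      have hwu2 : (Real.sqrt 2 * Real.sqrt (a : ℝ)) ^ 2 = 2 * (a : ℝ) := by
        rw [mul_pow, hw, hsqA]
      have ht1 : 1 < Real.sqrt 2 * Real.sqrt (a : ℝ) := by nlinarith
      have hv2 : Real.sqrt (r : ℝ) ^ 2 ≤ (Real.sqrt 2 * Real.sqrt (a : ℝ) - 1) ^ 2 := by
        nlinarith
      have hvle : Real.sqrt (r : ℝ) ≤ Real.sqrt 2 * Real.sqrt (a : ℝ) - 1 := by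
        nlinarith
      have hy : ((s : ℝ) + 1) ^ 2 ≤ (Real.sqrt (r : ℝ) + 1) ^ 2 := by nlinarith
      nlinarith
end
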